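/- arXiv:1112.5550 — 3 statements merged into one kernel-verified Lean document; each statement's English description precedes it below -/
import Mathlib

section
/- Let h : (0,1) → (0,∞) be a continuous function such that λ ↦ h(λ) and λ ↦ λ·h(λ) are integrable on (0,u) for every 0 < u < 1. Then the function H(u) = (∫_0^u λ h(λ) dλ) / (∫_0^u h(λ) dλ) is continuously differentiable on (0,1) with derivative H′(u) = h(u) · (∫_0^u (u−λ) h(λ) dλ) / (∫_0^u h(λ) dλ)², and H′(u) > 0 for every u ∈ (0,1); in particular H is strictly increasing on (0,1). -/
/-!
Write `F(v) = ∫₀^v h` and `G(v) = ∫₀^v λ h(λ) dλ`. By the fundamental theorem of calculus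
`F' = h` and `G' = λ h`, so the quotient rule gives
`H' = h (u F(u) - G(u)) / F(u)² = h(u) ∫₀^u (u - λ) h(λ) dλ / F(u)²`,
which is continuous, and positive because the integrand `(u - λ) h(λ)` is positive on `(0, u)`.
-/

open MeasureTheory Set

section RatioOfIntegrals

variable {f : ℝ → ℝ} {s : Set ℝ} {a u : ℝ}

lemma IntervalIntegrable.id_mul {μ : Measure ℝ} {b : ℝ} (hf : IntervalIntegrable f μ a b) :
    IntervalIntegrable (fun x => x * f x) μ a b :=
  hf.continuousOn_mul continuousOn_id

lemma integral_sub_mul_eq (hf : IntervalIntegrable f volume a u) :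
    ∫ x in a..u, (u - x) * f x = u * (∫ x in a..u, f x) - ∫ x in a..u, x * f x := by
  simp_rw [sub_mul]
  rw [intervalIntegral.integral_sub (hf.const_mul u) hf.id_mul,
    intervalIntegral.integral_const_mul]

lemma integral_sub_mul_pos (hau : a < u) (hf : IntervalIntegrable f volume a u)
    (hpos : ∀ x ∈ Ioo a u, 0 < f x) : 0 < ∫ x in a..u, (u - x) * f x := by
  refine intervalIntegral.intervalIntegral_pos_of_pos_on ?_
    (fun x hx => mul_pos (sub_pos.2 hx.2) (hpos x hx)) hau
  simp_rw [sub_mul]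
  exact (hf.const_mul u).sub hf.id_mul

lemma hasDerivAt_integral_of_continuousOn (hs : IsOpen s) (hf : ContinuousOn f s) (hu : u ∈ s)
    (hint : IntervalIntegrable f volume a u) :
    HasDerivAt (fun v => ∫ x in a..v, f x) (f u) u :=
  intervalIntegral.integral_hasDerivAt_right hint (hf.stronglyMeasurableAtFilter hs u hu)
    (hf.continuousAt (hs.mem_nhds hu))

lemma hasDerivAt_integral_mul_div_integral (hs : IsOpen s) (hf : ContinuousOn f s) (hu : u ∈ s)
    (hint : IntervalIntegrable f volume a u) (hF : ∫ x in a..u, f x ≠ 0) :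
    HasDerivAt (fun v => (∫ x in a..v, x * f x) / ∫ x in a..v, f x)
      (f u * (u * (∫ x in a..u, f x) - ∫ x in a..u, x * f x) / (∫ x in a..u, f x) ^ 2) u := by
  have hG : HasDerivAt (fun v => ∫ x in a..v, x * f x) (u * f u) u :=
    hasDerivAt_integral_of_continuousOn hs (continuousOn_id.mul hf) hu hint.id_mul
  exact (hG.div (hasDerivAt_integral_of_continuousOn hs hf hu hint) hF).congr_deriv (by ring)

lemma continuousOn_deriv_integral_mul_div_integral (hs : IsOpen s) (hf : ContinuousOn f s)
    (hint : ∀ u ∈ s, IntervalIntegrable f volume a u) (hF : ∀ u ∈ s, ∫ x in a..u, f x ≠ 0) :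
    ContinuousOn (deriv fun v => (∫ x in a..v, x * f x) / ∫ x in a..v, f x) s := by
  have hcont {g : ℝ → ℝ} (hg : ContinuousOn g s)
      (hgint : ∀ u ∈ s, IntervalIntegrable g volume a u) :
      ContinuousOn (fun v => ∫ x in a..v, g x) s := fun u hu =>
    (hasDerivAt_integral_of_continuousOn hs hg hu (hgint u hu)).continuousAt.continuousWithinAt
  have hF_cont := hcont hf hint
  have hG_cont := hcont (continuousOn_id.mul hf) fun u hu => (hint u hu).id_mul
  refine ((hf.mul ((continuousOn_id.mul hF_cont).sub hG_cont)).div (hF_cont.pow 2)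
    fun u hu => pow_ne_zero 2 (hF u hu)).congr fun u hu => ?_
  exact (hasDerivAt_integral_mul_div_integral hs hf hu (hint u hu) (hF u hu)).deriv

end RatioOfIntegrals

theorem ratio_of_integrals_strict_mono_general (h : ℝ → ℝ)
    (hcont : ContinuousOn h (Set.Ioo 0 1))
    (hpos : ∀ lam ∈ Set.Ioo (0:ℝ) 1, 0 < h lam)
    (hint : ∀ u ∈ Set.Ioo (0:ℝ) 1, IntervalIntegrable h volume 0 u) :
    (∀ u ∈ Set.Ioo (0:ℝ) 1,
        HasDerivAt (fun v => (∫ lam in (0:ℝ)..v, lam * h lam) / (∫ lam in (0:ℝ)..v, h lam))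
          (h u * (∫ lam in (0:ℝ)..u, (u - lam) * h lam) / (∫ lam in (0:ℝ)..u, h lam) ^ 2) u
        ∧ 0 < h u * (∫ lam in (0:ℝ)..u, (u - lam) * h lam) / (∫ lam in (0:ℝ)..u, h lam) ^ 2)
    ∧ ContinuousOn
        (deriv (fun v => (∫ lam in (0:ℝ)..v, lam * h lam) / (∫ lam in (0:ℝ)..v, h lam)))
        (Set.Ioo 0 1)
    ∧ StrictMonoOn (fun v => (∫ lam in (0:ℝ)..v, lam * h lam) / (∫ lam in (0:ℝ)..v, h lam))
        (Set.Ioo 0 1) := by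
  have hpos_on {u} (hu : u ∈ Ioo (0:ℝ) 1) : ∀ x ∈ Ioo 0 u, 0 < h x :=
    fun x hx => hpos x ⟨hx.1, hx.2.trans hu.2⟩
  have hF_pos {u} (hu : u ∈ Ioo (0:ℝ) 1) : 0 < ∫ x in (0:ℝ)..u, h x :=
    intervalIntegral.intervalIntegral_pos_of_pos_on (hint u hu) (hpos_on hu) hu.1
  have hderiv {u} (hu : u ∈ Ioo (0:ℝ) 1) :
      HasDerivAt (fun v => (∫ x in (0:ℝ)..v, x * h x) / ∫ x in (0:ℝ)..v, h x)
        (h u * (∫ x in (0:ℝ)..u, (u - x) * h x) / (∫ x in (0:ℝ)..u, h x) ^ 2) u := by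
    rw [integral_sub_mul_eq (hint u hu)]
    exact hasDerivAt_integral_mul_div_integral isOpen_Ioo hcont hu (hint u hu) (hF_pos hu).ne'
  have hderiv_pos {u} (hu : u ∈ Ioo (0:ℝ) 1) :
      0 < h u * (∫ x in (0:ℝ)..u, (u - x) * h x) / (∫ x in (0:ℝ)..u, h x) ^ 2 :=
    div_pos (mul_pos (hpos u hu) (integral_sub_mul_pos hu.1 (hint u hu) (hpos_on hu)))
      (pow_pos (hF_pos hu) 2)
  refine ⟨fun u hu => ⟨hderiv hu, hderiv_pos hu⟩,
    continuousOn_deriv_integral_mul_div_integral isOpen_Ioo hcont hint fun u hu => (hF_pos hu).ne',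
    strictMonoOn_of_deriv_pos (convex_Ioo 0 1)
      (fun u hu => (hderiv hu).continuousAt.continuousWithinAt) fun u hu => ?_⟩
  rw [interior_Ioo] at hu
  rw [(hderiv hu).deriv]
  exact hderiv_pos hu

/-- If `h : (0,1) → (0,∞)` is continuous and `h`, `λ·h(λ)` are integrable
on `(0,u)` for every `u ∈ (0,1)`, then `H(u) = (∫_0^u λ h(λ) dλ)/(∫_0^u h(λ) dλ)` is
continuously differentiable on `(0,1)` with the positive derivative
`H′(u) = h(u) (∫_0^u (u−λ) h(λ) dλ)/(∫_0^u h(λ) dλ)²`; in particular `H` is strictly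
increasing on `(0,1)`. -/
theorem ratio_of_integrals_strict_mono (h : ℝ → ℝ)
    (hcont : ContinuousOn h (Set.Ioo 0 1))
    (hpos : ∀ lam ∈ Set.Ioo (0:ℝ) 1, 0 < h lam)
    (hint : ∀ u ∈ Set.Ioo (0:ℝ) 1, IntervalIntegrable h volume 0 u)
    (hint' : ∀ u ∈ Set.Ioo (0:ℝ) 1, IntervalIntegrable (fun lam => lam * h lam) volume 0 u) :
    (∀ u ∈ Set.Ioo (0:ℝ) 1,
        HasDerivAt (fun v => (∫ lam in (0:ℝ)..v, lam * h lam) / (∫ lam in (0:ℝ)..v, h lam))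
          (h u * (∫ lam in (0:ℝ)..u, (u - lam) * h lam) / (∫ lam in (0:ℝ)..u, h lam) ^ 2) u
        ∧ 0 < h u * (∫ lam in (0:ℝ)..u, (u - lam) * h lam) / (∫ lam in (0:ℝ)..u, h lam) ^ 2)
    ∧ ContinuousOn
        (deriv (fun v => (∫ lam in (0:ℝ)..v, lam * h lam) / (∫ lam in (0:ℝ)..v, h lam)))
        (Set.Ioo 0 1)
    ∧ StrictMonoOn (fun v => (∫ lam in (0:ℝ)..v, lam * h lam) / (∫ lam in (0:ℝ)..v, h lam))
        (Set.Ioo 0 1) :=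
  ratio_of_integrals_strict_mono_general h hcont hpos hint
end

section
/- Let n be a positive integer and k an integer with 0 ≤ k < n. The function u ↦ λ₂*(u) = (∫_0^u λ^{k+1}(1−λ)^{n−k} dλ) / (∫_0^u λ^k (1−λ)^{n−k} dλ) is strictly increasing on (0,1]. Consequently, for every 0 < u ≤ 1 the chain of inequalities λ₂*(u) ≤ (k+1)/(n+2) = λ₂*(1) < (k+1)/(n+1) holds, i.e. every constrained neutral Bayesian estimate is bounded above by the unconstrained neutral Bayesian estimate, which in turn is strictly smaller than the conservative Bayesian estimate. -/
/-!
`λ₂*(u)` is the mean of `x` under the density `x ^ k * (1 - x) ^ (n - k)` restricted to `[0, u]`.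
Moving `u` from `a` to `b > a` averages the old mean, which is `< a`, with the mean over `[a, b]`,
which is `> a`, so the mean strictly increases. At `u = 1` integration by parts gives the Beta
recursion `(n + 2) B(k + 2, n - k + 1) = (k + 1) B(k + 1, n - k + 1)`, whence `λ₂*(1) = (k+1)/(n+2)`.
-/

open MeasureTheory

/-- The `(0,u)`-constrained neutral Bayesian estimator of the PD in the one-period
independent-defaults case with `n` borrowers and `k` observed defaults: the mean of the
posterior for the uniform prior on `(0,u)`. -/
noncomputable def neutralEstimator (n k : ℕ) (u : ℝ) : ℝ :=
  (∫ lam in (0:ℝ)..u, lam ^ (k + 1) * (1 - lam) ^ (n - k)) /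
    (∫ lam in (0:ℝ)..u, lam ^ k * (1 - lam) ^ (n - k))

open intervalIntegral Set

noncomputable def truncatedMean (g : ℝ → ℝ) (u : ℝ) : ℝ :=
  (∫ x in (0:ℝ)..u, x * g x) / ∫ x in (0:ℝ)..u, g x

lemma div_lt_add_div_add_of_le_mul_of_mul_lt {a F G E D : ℝ} (hG : 0 < G) (hD : 0 < D)
    (hF : F ≤ a * G) (hE : a * D < E) : F / G < (F + E) / (G + D) := by
  rw [div_lt_div_iff₀ hG (add_pos hG hD)]
  nlinarith [mul_le_mul_of_nonneg_right hF hD.le, mul_lt_mul_of_pos_right hE hG]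

section TruncatedMean

variable {g : ℝ → ℝ} {a b : ℝ}

lemma integral_id_mul_lt_mul_integral (hg : Continuous g) (hab : a < b)
    (hpos : ∀ x ∈ Ioo a b, 0 < g x) :
    ∫ x in a..b, x * g x < b * ∫ x in a..b, g x := by
  have hdiff : 0 < ∫ x in a..b, (b - x) * g x :=
    intervalIntegral_pos_of_pos_on (Continuous.intervalIntegrable (by fun_prop) _ _)
      (fun x hx => mul_pos (sub_pos.2 hx.2) (hpos x hx)) hab
  simp only [sub_mul] at hdiff
  rw [integral_sub (Continuous.intervalIntegrable (by fun_prop) _ _)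
    (Continuous.intervalIntegrable (by fun_prop) _ _), intervalIntegral.integral_const_mul] at hdiff
  linarith

lemma mul_integral_lt_integral_id_mul (hg : Continuous g) (hab : a < b)
    (hpos : ∀ x ∈ Ioo a b, 0 < g x) :
    a * ∫ x in a..b, g x < ∫ x in a..b, x * g x := by
  have hdiff : 0 < ∫ x in a..b, (x - a) * g x :=
    intervalIntegral_pos_of_pos_on (Continuous.intervalIntegrable (by fun_prop) _ _)
      (fun x hx => mul_pos (sub_pos.2 hx.1) (hpos x hx)) hab
  simp only [sub_mul] at hdiff
  rw [integral_sub (Continuous.intervalIntegrable (by fun_prop) _ _)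
    (Continuous.intervalIntegrable (by fun_prop) _ _), intervalIntegral.integral_const_mul] at hdiff
  linarith

theorem truncatedMean_strictMonoOn {c : ℝ} (hg : Continuous g)
    (hpos : ∀ x ∈ Ioo 0 c, 0 < g x) : StrictMonoOn (truncatedMean g) (Ioc 0 c) := by
  intro a ha b hb hab
  have hpos_a : ∀ x ∈ Ioo 0 a, 0 < g x := fun x hx => hpos x ⟨hx.1, hx.2.trans_le ha.2⟩
  have hpos_ab : ∀ x ∈ Ioo a b, 0 < g x :=
    fun x hx => hpos x ⟨ha.1.trans hx.1, hx.2.trans_le hb.2⟩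
  unfold truncatedMean
  have hsplit : ∀ f : ℝ → ℝ, Continuous f → ∫ x in (0:ℝ)..b, f x
      = (∫ x in (0:ℝ)..a, f x) + ∫ x in a..b, f x := fun f hf =>
    (integral_add_adjacent_intervals (hf.intervalIntegrable 0 a) (hf.intervalIntegrable a b)).symm
  rw [hsplit g hg, hsplit (fun x => x * g x) (by fun_prop)]
  exact div_lt_add_div_add_of_le_mul_of_mul_lt
    (intervalIntegral_pos_of_pos_on (hg.intervalIntegrable _ _) hpos_a ha.1)
    (intervalIntegral_pos_of_pos_on (hg.intervalIntegrable _ _) hpos_ab hab)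
    (integral_id_mul_lt_mul_integral hg ha.1 hpos_a).le
    (mul_integral_lt_integral_id_mul hg hab hpos_ab)

end TruncatedMean

lemma pow_mul_one_sub_pow_pos (k m : ℕ) {x : ℝ} (hx : x ∈ Ioo 0 1) :
    0 < x ^ k * (1 - x) ^ m :=
  mul_pos (pow_pos hx.1 k) (pow_pos (sub_pos.2 hx.2) m)

/-- Integration by parts against `x ^ (k + 1) * (1 - x) ^ (m + 1)`, which vanishes at `0` and `1`. -/
lemma integral_pow_mul_one_sub_pow_recurrence (k m : ℕ) :
    ((k : ℝ) + m + 2) * ∫ x in (0:ℝ)..1, x ^ (k + 1) * (1 - x) ^ m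
      = ((k : ℝ) + 1) * ∫ x in (0:ℝ)..1, x ^ k * (1 - x) ^ m := by
  have hderiv : ∀ x : ℝ, HasDerivAt (fun x => x ^ (k + 1) * (1 - x) ^ (m + 1))
      (((k : ℝ) + 1) * (x ^ k * (1 - x) ^ m) - ((k : ℝ) + m + 2) * (x ^ (k + 1) * (1 - x) ^ m))
      x := by
    intro x
    refine ((hasDerivAt_pow (k + 1) x).mul
      ((hasDerivAt_pow (m + 1) (1 - x)).comp x ((hasDerivAt_id x).const_sub 1))).congr_deriv ?_
    simp only [Function.comp_apply, Nat.cast_add, Nat.cast_one, add_tsub_cancel_right]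
    ring
  have hftc := integral_eq_sub_of_hasDerivAt (fun x _ => hderiv x)
    (Continuous.intervalIntegrable (by fun_prop) 0 1)
  rw [integral_sub (Continuous.intervalIntegrable (by fun_prop) _ _)
    (Continuous.intervalIntegrable (by fun_prop) _ _), intervalIntegral.integral_const_mul,
    intervalIntegral.integral_const_mul] at hftc
  norm_num at hftc
  linarith

lemma neutralEstimator_eq_truncatedMean (n k : ℕ) :
    neutralEstimator n k = truncatedMean (fun x => x ^ k * (1 - x) ^ (n - k)) := by
  funext u
  simp only [neutralEstimator, truncatedMean, pow_succ', mul_assoc]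

lemma neutralEstimator_one {n k : ℕ} (hk : k ≤ n) :
    neutralEstimator n k 1 = (k + 1 : ℝ) / (n + 2 : ℝ) := by
  have hpos : 0 < ∫ x in (0:ℝ)..1, x ^ k * (1 - x) ^ (n - k) :=
    intervalIntegral_pos_of_pos_on (Continuous.intervalIntegrable (by fun_prop) _ _)
      (fun x hx => pow_mul_one_sub_pow_pos k (n - k) hx) one_pos
  have hrec := integral_pow_mul_one_sub_pow_recurrence k (n - k)
  rw [Nat.cast_sub hk, add_sub_cancel] at hrec
  rw [neutralEstimator, div_eq_div_iff hpos.ne' (by positivity)]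
  linarith

theorem neutralEstimator_strictMono_and_bounds_general (n k : ℕ) (hk : k < n) :
    StrictMonoOn (neutralEstimator n k) (Set.Ioc 0 1)
    ∧ neutralEstimator n k 1 = (k + 1 : ℝ) / (n + 2 : ℝ)
    ∧ (∀ u ∈ Set.Ioc (0:ℝ) 1, neutralEstimator n k u ≤ (k + 1 : ℝ) / (n + 2 : ℝ))
    ∧ (k + 1 : ℝ) / (n + 2 : ℝ) < (k + 1 : ℝ) / (n + 1 : ℝ) := by
  have hmono : StrictMonoOn (neutralEstimator n k) (Ioc 0 1) := by
    rw [neutralEstimator_eq_truncatedMean]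
    exact truncatedMean_strictMonoOn (by fun_prop) fun x hx => pow_mul_one_sub_pow_pos k (n - k) hx
  have hone := neutralEstimator_one hk.le
  refine ⟨hmono, hone, fun u hu => ?_, ?_⟩
  · rw [← hone]
    exact hmono.monotoneOn hu (right_mem_Ioc.2 one_pos) hu.2
  · exact div_lt_div_of_pos_left (by positivity) (by positivity) (by linarith)

/-- The map `u ↦ λ₂*(u)` is strictly increasing on `(0,1]`; consequently,
for every `0 < u ≤ 1`, `λ₂*(u) ≤ (k+1)/(n+2) = λ₂*(1) < (k+1)/(n+1)`: every constrained
neutral Bayesian estimate is bounded above by the unconstrained neutral estimate, which is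
strictly smaller than the conservative Bayesian estimate. -/
theorem neutralEstimator_strictMono_and_bounds (n k : ℕ) (hn : 0 < n) (hk : k < n) :
    StrictMonoOn (neutralEstimator n k) (Set.Ioc 0 1)
    ∧ neutralEstimator n k 1 = (k + 1 : ℝ) / (n + 2 : ℝ)
    ∧ (∀ u ∈ Set.Ioc (0:ℝ) 1, neutralEstimator n k u ≤ (k + 1 : ℝ) / (n + 2 : ℝ))
    ∧ (k + 1 : ℝ) / (n + 2 : ℝ) < (k + 1 : ℝ) / (n + 1 : ℝ) :=
  neutralEstimator_strictMono_and_bounds_general n k hk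
end

section
/- Let 0 < ρ < 1, let q ∈ ℝ, let λ = Φ(q), and let S, ξ₁, ξ₂ be independent standard normal random variables. Define the default events D_i = {√ρ·S + √(1−ρ)·ξ_i ≤ q} for i = 1, 2. Then the probability that both borrowers default strictly exceeds the product of the individual default probabilities: P[D₁ ∩ D₂] > λ² = P[D₁]·P[D₂], i.e. Φ₂(q, q; ρ) > Φ(q)², where Φ₂(·,·;ρ) denotes the bivariate standard normal distribution function with correlation ρ. -/
open MeasureTheory ProbabilityTheory Real

/-- Standard normal density `φ`. -/
noncomputable def stdNormalPDF (s : ℝ) : ℝ := Real.exp (-s ^ 2 / 2) / Real.sqrt (2 * π)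

/-- Standard normal cumulative distribution function `Φ`. -/
noncomputable def stdNormalCDF (q : ℝ) : ℝ := ∫ t in Set.Iic q, stdNormalPDF t

/-!
Conditionally on the systemic factor `S = s`, the two borrowers default independently, each with
probability `p(s) = Φ((q - √ρ s) / √(1 - ρ))`. Hence `P[D₁ ∩ D₂] = E[p(S)²]`, while
`P[Dᵢ] = E[p(S)] = Φ(q)` because `√ρ S + √(1 - ρ) ξᵢ` is again standard normal. So
`P[D₁ ∩ D₂] - λ²` is the variance of `p(S)`, which is positive since `p` is strictly decreasing and
the law of `S` has no atoms.
-/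

open Set
open scoped NNReal ENNReal

lemma strictMono_cdf_of_absolutelyContinuous {μ : Measure ℝ} [IsProbabilityMeasure μ]
    (hμ : volume ≪ μ) : StrictMono (cdf μ) := by
  intro x y hxy
  have hIoc : μ (Ioc x y) ≠ 0 := fun h => hxy.not_ge (by simpa using hμ h)
  rwa [← measure_cdf (μ := μ), StieltjesFunction.measure_Ioc, ne_eq,
    ENNReal.ofReal_eq_zero, not_le, sub_pos] at hIoc

lemma sq_integral_lt_integral_sq_of_injective {α : Type*} [MeasurableSpace α] {μ : Measure α}
    [IsProbabilityMeasure μ] [NullSingletonClass μ] {f : α → ℝ} (hf : Function.Injective f)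
    (hf2 : MemLp f 2 μ) : (∫ x, f x ∂μ) ^ 2 < ∫ x, f x ^ 2 ∂μ := by
  have hvar : Var[f; μ] ≠ 0 := fun h0 => by
    have hconst : ∀ᵐ x ∂μ, f x = μ[f] := ae_eq_integral_of_variance_eq_zero hf2 h0
    have hnull : ∀ᵐ x ∂μ, f x ≠ μ[f] :=
      measure_eq_zero_iff_ae_notMem.1 ((subsingleton_singleton.preimage hf).measure_zero μ)
    obtain ⟨x, hx, hx'⟩ := (hconst.and hnull).exists
    exact hx' hx
  have hvar_pos := (variance_nonneg f μ).lt_of_ne' hvar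
  rw [variance_eq_sub hf2] at hvar_pos
  simpa using hvar_pos

lemma stdNormalCDF_eq_cdf : stdNormalCDF = cdf (gaussianReal 0 1) := by
  ext q
  have hpdf : stdNormalPDF = gaussianPDFReal 0 1 := by
    ext x
    simp [stdNormalPDF, gaussianPDFReal, div_eq_inv_mul]
  rw [cdf_eq_real, measureReal_def, gaussianReal_apply_eq_integral 0 one_ne_zero,
    ENNReal.toReal_ofReal (setIntegral_nonneg measurableSet_Iic
      fun x _ => gaussianPDFReal_nonneg 0 1 x), stdNormalCDF, hpdf]

noncomputable def condDefaultProb (a b q s : ℝ) : ℝ := cdf (gaussianReal 0 1) ((q - a * s) / b)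

section CondDefaultProb

variable {a b : ℝ} (q : ℝ)

lemma setOf_mul_add_mul_le_eq_Iic (hb : 0 < b) (s : ℝ) :
    {y : ℝ | a * s + b * y ≤ q} = Iic ((q - a * s) / b) := by
  ext y
  rw [mem_ofPred_eq, mem_Iic, le_div_iff₀ hb]
  constructor <;> intro <;> linarith

lemma measurable_condDefaultProb : Measurable (condDefaultProb a b q) :=
  (monotone_cdf _).measurable.comp ((measurable_const.sub (measurable_const_mul a)).div_const b)

lemma memLp_condDefaultProb (μ : Measure ℝ) [IsFiniteMeasure μ] (p : ℝ≥0∞) :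
    MemLp (condDefaultProb a b q) p μ :=
  MemLp.of_bound (measurable_condDefaultProb q).aestronglyMeasurable 1
    (ae_of_all _ fun _ => by
      rw [condDefaultProb, Real.norm_of_nonneg (cdf_nonneg _ _)]
      exact cdf_le_one _ _)

lemma strictAnti_condDefaultProb (ha : 0 < a) (hb : 0 < b) :
    StrictAnti (condDefaultProb a b q) := fun s t hst =>
  strictMono_cdf_of_absolutelyContinuous (gaussianReal_absolutelyContinuous' 0 one_ne_zero)
    (div_lt_div_of_pos_right (by nlinarith) hb)

end CondDefaultProb

namespace ProbabilityTheory.IndepFun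

variable {Ω : Type*} [MeasurableSpace Ω] {P : Measure Ω} {a b : ℝ}

lemma map_mul_add_mul_eq_gaussianReal {X Y : Ω → ℝ} (hXY : IndepFun X Y P) {m₁ m₂ : ℝ}
    {v₁ v₂ : ℝ≥0}
    (hX : P.map X = gaussianReal m₁ v₁) (hY : P.map Y = gaussianReal m₂ v₂) (a b : ℝ) :
    P.map (fun ω => a * X ω + b * Y ω)
      = gaussianReal (a * m₁ + b * m₂) (⟨a ^ 2, sq_nonneg a⟩ * v₁ + ⟨b ^ 2, sq_nonneg b⟩ * v₂) := by
  have hXm : AEMeasurable X P := aemeasurable_of_map_neZero (by rw [hX]; infer_instance)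
  have hYm : AEMeasurable Y P := aemeasurable_of_map_neZero (by rw [hY]; infer_instance)
  refine gaussianReal_add_gaussianReal_of_indepFun (X := (a * ·) ∘ X) (Y := (b * ·) ∘ Y)
    (hXY.comp (measurable_const_mul a) (measurable_const_mul b)) ?_ ?_
  · rw [← AEMeasurable.map_map_of_aemeasurable (measurable_const_mul a).aemeasurable hXm, hX,
      gaussianReal_map_const_mul]
    rfl
  · rw [← AEMeasurable.map_map_of_aemeasurable (measurable_const_mul b).aemeasurable hYm, hY,
      gaussianReal_map_const_mul]
    rfl

lemma measure_prodMk_preimage {α β : Type*} [MeasurableSpace α] [MeasurableSpace β]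
    [IsFiniteMeasure P] {X : Ω → α} {Y : Ω → β}
    (hXY : IndepFun X Y P) (hX : AEMeasurable X P) (hY : AEMeasurable Y P)
    {s : Set (α × β)} (hs : MeasurableSet s) :
    P ((fun ω => (X ω, Y ω)) ⁻¹' s) = ∫⁻ x, P.map Y (Prod.mk x ⁻¹' s) ∂(P.map X) := by
  rw [← Measure.map_apply_of_aemeasurable (hX.prodMk hY) hs,
    (indepFun_iff_map_prod_eq_prod_map_map hX hY).1 hXY, Measure.prod_apply hs]

lemma toReal_measure_mul_add_mul_le_eq_cdf (q : ℝ) {X Y : Ω → ℝ}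
    (hXY : IndepFun X Y P) (hX : P.map X = gaussianReal 0 1) (hY : P.map Y = gaussianReal 0 1)
    (hab : a ^ 2 + b ^ 2 = 1) :
    (P {ω | a * X ω + b * Y ω ≤ q}).toReal = cdf (gaussianReal 0 1) q := by
  have hlaw : P.map (fun ω => a * X ω + b * Y ω) = gaussianReal 0 1 := by
    rw [hXY.map_mul_add_mul_eq_gaussianReal hX hY a b]
    congr 1
    · ring
    · ext
      change a ^ 2 * 1 + b ^ 2 * 1 = 1
      simpa using hab
  rw [cdf_eq_real, measureReal_def, ← hlaw, Measure.map_apply_of_aemeasurable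
    (aemeasurable_of_map_neZero (by rw [hlaw]; infer_instance)) measurableSet_Iic]
  rfl

lemma toReal_measure_mul_add_mul_le_eq_integral [IsFiniteMeasure P] (q : ℝ)
    {X Y : Ω → ℝ} (hXY : IndepFun X Y P) (hX : AEMeasurable X P)
    (hY : P.map Y = gaussianReal 0 1) (hb : 0 < b) :
    (P {ω | a * X ω + b * Y ω ≤ q}).toReal
      = ∫ s, condDefaultProb a b q s ∂(P.map X) := by
  have hs : MeasurableSet {p : ℝ × ℝ | a * p.1 + b * p.2 ≤ q} :=
    measurableSet_le (by fun_prop) measurable_const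
  rw [integral_eq_lintegral_of_nonneg_ae (f := condDefaultProb a b q)
      (ae_of_all _ fun _ => cdf_nonneg _ _)
      (measurable_condDefaultProb q).aestronglyMeasurable,
    ← preimage_ofPred_eq (f := fun ω => (X ω, Y ω)) (p := fun p => a * p.1 + b * p.2 ≤ q),
    hXY.measure_prodMk_preimage hX (aemeasurable_of_map_neZero (by rw [hY]; infer_instance)) hs, hY]
  congr 1
  refine lintegral_congr fun s => ?_
  rw [preimage_ofPred_eq, setOf_mul_add_mul_le_eq_Iic q hb, condDefaultProb, ofReal_cdf]

lemma toReal_measure_mul_add_mul_le_and_eq_integral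
    [IsFiniteMeasure P] (q : ℝ) {X Y₁ Y₂ : Ω → ℝ} (hXY : IndepFun X (fun ω => (Y₁ ω, Y₂ ω)) P)
    (hX : AEMeasurable X P)
    (hY : P.map (fun ω => (Y₁ ω, Y₂ ω)) = (gaussianReal 0 1).prod (gaussianReal 0 1))
    (hb : 0 < b) :
    (P {ω | a * X ω + b * Y₁ ω ≤ q ∧ a * X ω + b * Y₂ ω ≤ q}).toReal
      = ∫ s, condDefaultProb a b q s ^ 2 ∂(P.map X) := by
  have hs : MeasurableSet {p : ℝ × ℝ × ℝ | a * p.1 + b * p.2.1 ≤ q ∧ a * p.1 + b * p.2.2 ≤ q} := by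
    rw [ofPred_and]
    exact (measurableSet_le (by fun_prop) measurable_const).inter
      (measurableSet_le (by fun_prop) measurable_const)
  rw [integral_eq_lintegral_of_nonneg_ae (ae_of_all _ fun _ => sq_nonneg _)
      ((measurable_condDefaultProb q).pow_const 2).aestronglyMeasurable,
    ← preimage_ofPred_eq (f := fun ω => (X ω, Y₁ ω, Y₂ ω))
      (p := fun p => a * p.1 + b * p.2.1 ≤ q ∧ a * p.1 + b * p.2.2 ≤ q),
    hXY.measure_prodMk_preimage hX (aemeasurable_of_map_neZero (by rw [hY]; infer_instance)) hs, hY]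
  congr 1
  refine lintegral_congr fun s => ?_
  have hslice : Prod.mk s ⁻¹' {p : ℝ × ℝ × ℝ | a * p.1 + b * p.2.1 ≤ q ∧ a * p.1 + b * p.2.2 ≤ q}
      = {y | a * s + b * y ≤ q} ×ˢ {y | a * s + b * y ≤ q} := rfl
  rw [hslice, setOf_mul_add_mul_le_eq_Iic q hb, Measure.prod_prod, condDefaultProb,
    ENNReal.ofReal_pow (cdf_nonneg _ _), ofReal_cdf, sq]

end ProbabilityTheory.IndepFun

/-- In the one-factor Gaussian model with asset correlation `0 < ρ < 1`,
with `S, ξ₁, ξ₂` independent standard normal (here `W 0 = S`, `W 1 = ξ₁`, `W 2 = ξ₂`) and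
default events `D_i = {√ρ S + √(1−ρ) ξ_i ≤ q}`, the joint default probability strictly
exceeds the product of the individual default probabilities `λ² = Φ(q)²`. -/
theorem joint_default_probability_gt (Ω : Type*) [MeasurableSpace Ω]
    (P : Measure Ω) [IsProbabilityMeasure P]
    (W : Fin 3 → Ω → ℝ)
    (hindep : iIndepFun W P)
    (hlaw : ∀ i, Measure.map (W i) P = gaussianReal 0 1)
    (ρ q : ℝ) (hρ0 : 0 < ρ) (hρ1 : ρ < 1) :
    (P {ω | Real.sqrt ρ * W 0 ω + Real.sqrt (1 - ρ) * W 1 ω ≤ q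
          ∧ Real.sqrt ρ * W 0 ω + Real.sqrt (1 - ρ) * W 2 ω ≤ q}).toReal
      > stdNormalCDF q ^ 2
    ∧ (P {ω | Real.sqrt ρ * W 0 ω + Real.sqrt (1 - ρ) * W 1 ω ≤ q}).toReal = stdNormalCDF q
    ∧ (P {ω | Real.sqrt ρ * W 0 ω + Real.sqrt (1 - ρ) * W 2 ω ≤ q}).toReal = stdNormalCDF q := by
  have ha : 0 < √ρ := Real.sqrt_pos.2 hρ0
  have hb : 0 < √(1 - ρ) := Real.sqrt_pos.2 (by linarith)
  have hab : √ρ ^ 2 + √(1 - ρ) ^ 2 = 1 := by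
    rw [Real.sq_sqrt hρ0.le, Real.sq_sqrt (by linarith)]
    ring
  have hW (i : Fin 3) : AEMeasurable (W i) P :=
    aemeasurable_of_map_neZero (by rw [hlaw i]; infer_instance)
  have hmarginal (i : Fin 3) (hi : i ≠ 0) :
      (P {ω | √ρ * W 0 ω + √(1 - ρ) * W i ω ≤ q}).toReal = stdNormalCDF q := by
    rw [stdNormalCDF_eq_cdf]
    exact (hindep.indepFun hi.symm).toReal_measure_mul_add_mul_le_eq_cdf q (hlaw 0) (hlaw i) hab
  have h01 : IndepFun (W 0) (W 1) P := hindep.indepFun (by decide)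
  have hmean : ∫ s, condDefaultProb √ρ √(1 - ρ) q s ∂(gaussianReal 0 1) = stdNormalCDF q := by
    rw [← hlaw 0, ← h01.toReal_measure_mul_add_mul_le_eq_integral q (hW 0) (hlaw 1) hb]
    exact hmarginal 1 (by decide)
  have hpair : P.map (fun ω => (W 1 ω, W 2 ω)) = (gaussianReal 0 1).prod (gaussianReal 0 1) := by
    rw [(hindep.indepFun (by decide)).map_prod_eq_prod_map_map (hW 1) (hW 2), hlaw 1, hlaw 2]
  have hjoint := (hindep.indepFun_prodMk₀ hW 1 2 0 (by decide) (by decide)).symm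
    |>.toReal_measure_mul_add_mul_le_and_eq_integral (a := √ρ) q (hW 0) hpair hb
  rw [hlaw 0] at hjoint
  refine ⟨?_, hmarginal 1 (by decide), hmarginal 2 (by decide)⟩
  rw [hjoint, ← hmean]
  have := nullSingletonClass_gaussianReal (μ := 0) (v := 1) one_ne_zero
  exact sq_integral_lt_integral_sq_of_injective (strictAnti_condDefaultProb q ha hb).injective
    (memLp_condDefaultProb q _ 2)
end
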